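/- (Lipschitz continuity of the distribution map ℳ_Q.) Fix Q : 𝒳 × 𝒜 → ℝ and let {P^{Q,μ}} be a family of row-stochastic kernels on a finite set 𝒳 indexed by probability distributions μ, satisfying Σ_{x'} |P^{Q,μ₁}(x,x') − P^{Q,μ₂}(x,x')| ≤ L_p ‖μ₁−μ₂‖_TV for all x with L_p > 0, and the uniform Doeblin condition P^{Q,μ}(x,x') ≥ β ν(x') for all x, x', μ, with ν a probability distribution and β ∈ (0,1). Define ℳ_Q(μ) = μ P^{Q,μ}. Then for all probability distributions μ₁, μ₂ on 𝒳: ‖ℳ_Q(μ₁) − ℳ_Q(μ₂)‖_TV ≤ (2(1−β) + L_p) ‖μ₁ − μ₂‖_TV. -/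

import Mathlib

open Finset

/-- A probability distribution on a finite set. -/
def IsProb {𝒳 : Type*} [Fintype 𝒳] (μ : 𝒳 → ℝ) : Prop :=
  (∀ x, 0 ≤ μ x) ∧ ∑ x, μ x = 1

/-- Total variation norm: `‖m‖_TV = sup_{A ⊆ 𝒳} |Σ_{x∈A} m(x)|`. -/
noncomputable def tvNorm {𝒳 : Type*} [Fintype 𝒳] (m : 𝒳 → ℝ) : ℝ :=
  ⨆ A : Finset 𝒳, |∑ x ∈ A, m x|

/-- A row-stochastic kernel on a finite set. -/
def IsKernel {𝒳 : Type*} [Fintype 𝒳] (P : 𝒳 → 𝒳 → ℝ) : Prop :=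
  (∀ x x', 0 ≤ P x x') ∧ ∀ x, ∑ x', P x x' = 1

/-!
Write `μ₁P₁ − μ₂P₂ = (μ₁ − μ₂)P₁ + μ₂(P₁ − P₂)`. The second term is controlled by the Lipschitz
bound on the kernels. For the first, the Doeblin minorization confines every `x ↦ P₁(x, A)` to an
interval of length `1 − β`; since `μ₁ − μ₂` has total mass zero that interval can be shifted to
`[0, 1 − β]`, giving at most `(1 − β) Σ|μ₁ − μ₂| ≤ 2(1 − β)‖μ₁ − μ₂‖_TV`.
-/

section TotalVariation

variable {𝒳 : Type*} [Fintype 𝒳]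

lemma abs_sum_le_tvNorm (m : 𝒳 → ℝ) (A : Finset 𝒳) : |∑ x ∈ A, m x| ≤ tvNorm m :=
  le_ciSup (Set.finite_range fun A : Finset 𝒳 => |∑ x ∈ A, m x|).bddAbove A

lemma tvNorm_le {m : 𝒳 → ℝ} {C : ℝ} (h : ∀ A : Finset 𝒳, |∑ x ∈ A, m x| ≤ C) : tvNorm m ≤ C :=
  ciSup_le h

lemma tvNorm_add_le (m m' : 𝒳 → ℝ) : tvNorm (m + m') ≤ tvNorm m + tvNorm m' :=
  tvNorm_le fun A => by
    simpa only [Pi.add_apply, sum_add_distrib] using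
      (abs_add_le _ _).trans (add_le_add (abs_sum_le_tvNorm m A) (abs_sum_le_tvNorm m' A))

lemma sum_abs_le_two_mul_tvNorm {m : 𝒳 → ℝ} (hm : ∑ x, m x = 0) :
    ∑ x, |m x| ≤ 2 * tvNorm m := by
  have habs : ∀ x, |m x| = 2 * (if 0 ≤ m x then m x else 0) - m x := by
    intro x
    split_ifs with h
    · rw [abs_of_nonneg h]; ring
    · rw [abs_of_neg (not_le.mp h)]; ring
  calc ∑ x, |m x| = 2 * ∑ x with 0 ≤ m x, m x := by
        simp only [habs, sum_sub_distrib, ← mul_sum, ← sum_filter, hm, sub_zero]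
    _ ≤ 2 * tvNorm m := by
        gcongr
        exact (le_abs_self _).trans (abs_sum_le_tvNorm m _)

end TotalVariation

lemma abs_sum_mul_le_of_sum_eq_zero {ι : Type*} {s : Finset ι} {m f : ι → ℝ} {a b : ℝ}
    (hm : ∑ i ∈ s, m i = 0) (hf : ∀ i ∈ s, a ≤ f i ∧ f i ≤ a + b) :
    |∑ i ∈ s, m i * f i| ≤ b * ∑ i ∈ s, |m i| := by
  have hshift : ∑ i ∈ s, m i * f i = ∑ i ∈ s, m i * (f i - a) := by
    simp only [mul_sub, sum_sub_distrib, ← sum_mul, hm, zero_mul, sub_zero]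
  rw [hshift, mul_sum]
  refine (abs_sum_le_sum_abs _ _).trans (sum_le_sum fun i hi => ?_)
  rw [abs_mul, mul_comm b]
  gcongr
  obtain ⟨hlo, hhi⟩ := hf i hi
  exact abs_le.mpr ⟨by linarith, by linarith⟩

section Kernels

variable {𝒳 : Type*} [Fintype 𝒳]

lemma sum_kernel_mem_Icc_of_minorized {K : 𝒳 → 𝒳 → ℝ} {ν : 𝒳 → ℝ} {β : ℝ}
    (hK : ∀ x, ∑ x', K x x' = 1) (hν : ∑ x, ν x = 1) (hmin : ∀ x x', β * ν x' ≤ K x x')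
    (A : Finset 𝒳) (x : 𝒳) :
    β * ∑ x' ∈ A, ν x' ≤ ∑ x' ∈ A, K x x' ∧
      ∑ x' ∈ A, K x x' ≤ β * ∑ x' ∈ A, ν x' + (1 - β) := by
  have hexcess : ∑ x' ∈ A, (K x x' - β * ν x') ≤ ∑ x', (K x x' - β * ν x') :=
    sum_le_sum_of_subset_of_nonneg (subset_univ A) fun x' _ _ => sub_nonneg.mpr (hmin x x')
  simp only [sum_sub_distrib, ← mul_sum, hK, hν, mul_one] at hexcess
  exact ⟨mul_sum A ν β ▸ sum_le_sum fun x' _ => hmin x x', by linarith⟩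

lemma tvNorm_mul_kernel_le_of_minorized {K : 𝒳 → 𝒳 → ℝ} {ν m : 𝒳 → ℝ} {β : ℝ} (hβ : β ≤ 1)
    (hK : ∀ x, ∑ x', K x x' = 1) (hν : ∑ x, ν x = 1) (hmin : ∀ x x', β * ν x' ≤ K x x')
    (hm : ∑ x, m x = 0) :
    tvNorm (fun x' => ∑ x, m x * K x x') ≤ 2 * (1 - β) * tvNorm m :=
  tvNorm_le fun A => by
    rw [sum_comm]
    simp only [← mul_sum]
    calc |∑ x, m x * ∑ x' ∈ A, K x x'| ≤ (1 - β) * ∑ x, |m x| :=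
          abs_sum_mul_le_of_sum_eq_zero hm fun x _ =>
            sum_kernel_mem_Icc_of_minorized hK hν hmin A x
      _ ≤ (1 - β) * (2 * tvNorm m) :=
          mul_le_mul_of_nonneg_left (sum_abs_le_two_mul_tvNorm hm) (sub_nonneg.mpr hβ)
      _ = 2 * (1 - β) * tvNorm m := by ring

lemma tvNorm_mul_sub_mul_kernel_le {μ : 𝒳 → ℝ} {K K' : 𝒳 → 𝒳 → ℝ} {ε : ℝ} (hμ : IsProb μ)
    (hKK' : ∀ x, ∑ x', |K x x' - K' x x'| ≤ ε) :
    tvNorm (fun x' => ∑ x, μ x * K x x' - ∑ x, μ x * K' x x') ≤ ε :=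
  tvNorm_le fun A => by
    simp only [← sum_sub_distrib, ← mul_sub]
    rw [sum_comm]
    simp only [← mul_sum]
    calc |∑ x, μ x * ∑ x' ∈ A, (K x x' - K' x x')| ≤ ∑ x, μ x * ε := by
          refine (abs_sum_le_sum_abs _ _).trans (sum_le_sum fun x _ => ?_)
          rw [abs_mul, abs_of_nonneg (hμ.1 x)]
          refine mul_le_mul_of_nonneg_left ?_ (hμ.1 x)
          calc |∑ x' ∈ A, (K x x' - K' x x')| ≤ ∑ x' ∈ A, |K x x' - K' x x'| :=
                abs_sum_le_sum_abs _ _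
            _ ≤ ∑ x', |K x x' - K' x x'| :=
                sum_le_sum_of_subset_of_nonneg (subset_univ A) fun _ _ _ => abs_nonneg _
            _ ≤ ε := hKK' x
      _ = ε := by rw [← sum_mul, hμ.2, one_mul]

end Kernels

theorem distribution_map_lipschitz_general {𝒳 : Type*} [Fintype 𝒳]
    (P : (𝒳 → ℝ) → 𝒳 → 𝒳 → ℝ)
    (Lp : ℝ)
    (hker : ∀ μ, IsProb μ → IsKernel (P μ))
    (hlip : ∀ μ₁ μ₂, IsProb μ₁ → IsProb μ₂ → ∀ x,
      ∑ x', |P μ₁ x x' - P μ₂ x x'| ≤ Lp * tvNorm (fun y => μ₁ y - μ₂ y))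
    (ν : 𝒳 → ℝ) (hν : IsProb ν)
    (β : ℝ) (hβ : β ∈ Set.Ioo (0 : ℝ) 1)
    (hDoe : ∀ μ, IsProb μ → ∀ x x', β * ν x' ≤ P μ x x')
    (μ₁ μ₂ : 𝒳 → ℝ) (hμ₁ : IsProb μ₁) (hμ₂ : IsProb μ₂) :
    tvNorm (fun x' => (∑ x, μ₁ x * P μ₁ x x') - ∑ x, μ₂ x * P μ₂ x x') ≤
      (2 * (1 - β) + Lp) * tvNorm (fun x => μ₁ x - μ₂ x) := by
  have hmass : ∑ x, (μ₁ x - μ₂ x) = 0 := by rw [sum_sub_distrib, hμ₁.2, hμ₂.2, sub_self]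
  have hsplit : (fun x' => (∑ x, μ₁ x * P μ₁ x x') - ∑ x, μ₂ x * P μ₂ x x') =
      (fun x' => ∑ x, (μ₁ x - μ₂ x) * P μ₁ x x') +
        fun x' => ∑ x, μ₂ x * P μ₁ x x' - ∑ x, μ₂ x * P μ₂ x x' := by
    ext x'
    simp only [Pi.add_apply, sub_mul, sum_sub_distrib]
    ring
  rw [hsplit, add_mul]
  exact (tvNorm_add_le _ _).trans <| add_le_add
    (tvNorm_mul_kernel_le_of_minorized hβ.2.le (hker μ₁ hμ₁).2 hν.2 (hDoe μ₁ hμ₁) hmass)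
    (tvNorm_mul_sub_mul_kernel_le hμ₂ (hlip μ₁ μ₂ hμ₁ hμ₂))

/-- Lipschitz continuity of the distribution map `ℳ_Q(μ) = μ P^{Q,μ}`:
`‖ℳ_Q(μ₁) − ℳ_Q(μ₂)‖_TV ≤ (2(1−β) + L_p)‖μ₁ − μ₂‖_TV`. -/
theorem distribution_map_lipschitz {𝒳 𝒜 : Type*} [Fintype 𝒳] [Fintype 𝒜]
    (Q : 𝒳 → 𝒜 → ℝ)
    (P : (𝒳 → ℝ) → 𝒳 → 𝒳 → ℝ)
    (Lp : ℝ) (hLp : 0 < Lp)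
    (hker : ∀ μ, IsProb μ → IsKernel (P μ))
    (hlip : ∀ μ₁ μ₂, IsProb μ₁ → IsProb μ₂ → ∀ x,
      ∑ x', |P μ₁ x x' - P μ₂ x x'| ≤ Lp * tvNorm (fun y => μ₁ y - μ₂ y))
    (ν : 𝒳 → ℝ) (hν : IsProb ν)
    (β : ℝ) (hβ : β ∈ Set.Ioo (0 : ℝ) 1)
    (hDoe : ∀ μ, IsProb μ → ∀ x x', β * ν x' ≤ P μ x x')
    (μ₁ μ₂ : 𝒳 → ℝ) (hμ₁ : IsProb μ₁) (hμ₂ : IsProb μ₂) :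
    tvNorm (fun x' => (∑ x, μ₁ x * P μ₁ x x') - ∑ x, μ₂ x * P μ₂ x x') ≤
      (2 * (1 - β) + Lp) * tvNorm (fun x => μ₁ x - μ₂ x) :=
  distribution_map_lipschitz_general P Lp hker hlip ν hν β hβ hDoe μ₁ μ₂ hμ₁ hμ₂
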